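/- (Theorem 2) Let m ≥ 1, b ≥ 1, and n ≥ 1 with b dividing n, and set r = n/b. The total reuse distance of the mini-batched trace of length n·m given by a(i) = (i / b) mod m (the pattern (e₁^b, ..., e_m^b) repeated n/b times) equals exactly (n/b)·m·(m + b − 1); hence mini-batching reduces the reuse distance of the ensemble implementation to O(n·m²/b), a reduction by the constant factor b compared to the sequential total n·m². -/
import Mathlib


/-- The set of previous accesses to the same address as position `i`. -/
def prevAccesses {N m : ℕ} (a : Fin N → Fin m) (i : Fin N) : Finset (Fin N) :=
  Finset.univ.filter (fun j => j < i ∧ a j = a i)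

/-- The reuse distance of the access at position `i` in the trace `a`:
the number of distinct addresses occurring in the segment from just after the
previous access to the same address up to and including `i`; defined to be `m`
for a first access. -/
def RD {N m : ℕ} (a : Fin N → Fin m) (i : Fin N) : ℕ :=
  if h : (prevAccesses a i).Nonempty then
    ((Finset.univ.filter
        (fun k : Fin N => (prevAccesses a i).max' h < k ∧ k ≤ i)).image a).card
  else m

/-- The total reuse distance of a trace. -/
def totalRD {N m : ℕ} (a : Fin N → Fin m) : ℕ := ∑ i, RD a i

/-- The mini-batched trace with mini-batch size `b` on a stream of `n`
instances (with `b ∣ n`): the pattern `(e₁^b, …, e_m^b)` repeated `n / b`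
times, of total length `n·m`. -/
def batchTrace (n m b : ℕ) (hm : 0 < m) : Fin (n * m) → Fin m :=
  fun i => ⟨(i.val / b) % m, Nat.mod_lt _ hm⟩

/-- First access: RD equals m. -/
lemma RD_eq_of_no_prev {N m : ℕ} (a : Fin N → Fin m) (i : Fin N)
    (h : ∀ j, j < i → a j ≠ a i) : RD a i = m := by
  have : ¬ (prevAccesses a i).Nonempty := by
    rintro ⟨j, hj⟩
    simp only [prevAccesses, Finset.mem_filter, Finset.mem_univ, true_and] at hj
    exact h j hj.1 hj.2
  rw [RD, dif_neg this]

/-- If `j₀` is the last previous access, RD is the card of addresses in the segment. -/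
lemma RD_eq_of_max {N m : ℕ} (a : Fin N → Fin m) (i j₀ : Fin N)
    (h1 : j₀ < i) (h2 : a j₀ = a i)
    (h3 : ∀ j, j₀ < j → j < i → a j ≠ a i) :
    RD a i = ((Finset.univ.filter (fun k : Fin N => j₀ < k ∧ k ≤ i)).image a).card := by
  have hj₀mem : j₀ ∈ prevAccesses a i := by
    simp [prevAccesses, h1, h2]
  have hne : (prevAccesses a i).Nonempty := ⟨j₀, hj₀mem⟩
  have hmax : (prevAccesses a i).max' hne = j₀ := by
    apply le_antisymm
    · by_contra h
      push_neg at h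
      have hmem := (prevAccesses a i).max'_mem hne
      simp only [prevAccesses, Finset.mem_filter, Finset.mem_univ, true_and] at hmem
      exact h3 _ h hmem.1 hmem.2
    · exact Finset.le_max' _ _ hj₀mem
  rw [RD, dif_pos hne, hmax]

/-- Two naturals with equal residues that are within `m` of each other are equal. -/
lemma mod_eq_close {m x y : ℕ} (h : x % m = y % m) (hle : x ≤ y) (hlt : y - x < m) :
    x = y := by
  have hd : m ∣ y - x := (Nat.modEq_iff_dvd' hle).mp h
  rcases Nat.eq_zero_or_pos (y - x) with h0 | hpos
  · omega
  · exact absurd (Nat.le_of_dvd hpos hd) (by omega)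

lemma div_pred_eq {i b : ℕ} (hb : 0 < b) (h : i % b ≠ 0) : (i - 1) / b = i / b := by
  have hdm := Nat.div_add_mod i b
  set q := i / b with hq
  set s := i % b with hs
  have hs1 : 1 ≤ s := Nat.one_le_iff_ne_zero.mpr h
  have hsb : s < b := Nat.mod_lt _ hb
  have hi1 : i - 1 = (s - 1) + b * q := by omega
  rw [hi1, Nat.add_mul_div_left _ _ hb, Nat.div_eq_of_lt (by omega)]
  omega

/-- Count of multiples of `b` below `c*b`. -/
lemma count_mult (b c : ℕ) (hb : 0 < b) :
    ((Finset.range (c * b)).filter (fun i => i % b = 0)).card = c := by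
  have himg : (Finset.range (c * b)).filter (fun i => i % b = 0)
      = (Finset.range c).image (· * b) := by
    ext x
    simp only [Finset.mem_filter, Finset.mem_range, Finset.mem_image]
    constructor
    · rintro ⟨hx, hmod⟩
      exact ⟨x / b, (Nat.div_lt_iff_lt_mul hb).mpr hx,
        Nat.div_mul_cancel (Nat.dvd_of_mod_eq_zero hmod)⟩
    · rintro ⟨j, hj, rfl⟩
      exact ⟨(Nat.mul_lt_mul_right hb).mpr hj, Nat.mul_mod_left _ _⟩
  rw [himg, Finset.card_image_of_injective _
    (fun x y hxy => Nat.eq_of_mul_eq_mul_right hb hxy), Finset.card_range]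

/-- The reuse distance of each access of the mini-batched trace. -/
lemma RD_batch {n m b : ℕ} (hm : 0 < m) (hb : 0 < b) (i : Fin (n * m)) :
    RD (batchTrace n m b hm) i = if i.val % b = 0 then m else 1 := by
  by_cases h : i.val % b = 0
  · rw [if_pos h]
    have hdvd : b ∣ i.val := Nat.dvd_of_mod_eq_zero h
    set k := i.val / b with hk
    have hib : i.val = k * b := (Nat.div_mul_cancel hdvd).symm
    by_cases hkm : k < m
    · -- first access
      apply RD_eq_of_no_prev
      intro j hj hja
      have hq : j.val / b < k := (Nat.div_lt_iff_lt_mul hb).mpr (hib ▸ hj)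
      have : (j.val / b) % m = k % m := congrArg Fin.val hja
      have : j.val / b = k := by
        rw [Nat.mod_eq_of_lt (lt_trans hq hkm), Nat.mod_eq_of_lt hkm] at this
        exact this
      omega
    · -- previous access exists, m batches back
      push_neg at hkm
      have hkb : (k - m + 1) * b ≤ k * b :=
        Nat.mul_le_mul_right b (by omega)
      have hj₀lt : (k - m) * b + (b - 1) < i.val := by
        have : (k - m) * b + b = (k - m + 1) * b := by ring
        omega
      set j₀ : Fin (n * m) := ⟨(k - m) * b + (b - 1), lt_trans hj₀lt i.isLt⟩ with hj₀
      have hj₀div : j₀.val / b = k - m := by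
        show ((k - m) * b + (b - 1)) / b = k - m
        rw [show (k - m) * b + (b - 1) = (b - 1) + b * (k - m) by ring,
          Nat.add_mul_div_left _ _ hb, Nat.div_eq_of_lt (by omega)]
        omega
      have hkmod : (k - m) % m = k % m := by
        conv_rhs => rw [show k = (k - m) + m by omega]
        rw [Nat.add_mod_right]
      have haddr : ∀ j : Fin (n * m),
          batchTrace n m b hm j = batchTrace n m b hm i ↔ (j.val / b) % m = k % m := by
        intro j
        constructor
        · intro hja; exact congrArg Fin.val hja
        · intro hja; exact Fin.ext hja
      rw [RD_eq_of_max (batchTrace n m b hm) i j₀ hj₀lt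
        ((haddr j₀).mpr (by rw [hj₀div, hkmod]))
        (by
          intro j hjl hjr hja
          have hq : (j.val / b) % m = k % m := (haddr j).mp hja
          have hlow : k - m + 1 ≤ j.val / b := by
            rw [Nat.le_div_iff_mul_le hb]
            have : j₀.val + 1 ≤ j.val := hjl
            have : (k - m) * b + b ≤ j.val := by
              simp only [hj₀] at this; omega
            calc (k - m + 1) * b = (k - m) * b + b := by ring
              _ ≤ j.val := this
          have hhigh : j.val / b < k := (Nat.div_lt_iff_lt_mul hb).mpr (hib ▸ hjr)
          have := mod_eq_close hq (le_of_lt hhigh) (by omega)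
          omega)]
      -- segment's image has exactly m addresses
      set S := Finset.univ.filter (fun k' : Fin (n * m) => j₀ < k' ∧ k' ≤ i) with hS
      apply le_antisymm
      · calc ((S.image (batchTrace n m b hm)).card) ≤ (Finset.univ : Finset (Fin m)).card :=
            Finset.card_le_univ _
          _ = m := by simp
      · -- injection from Fin m into the image
        have hg : ∀ t : Fin m, (k - m + 1 + t.val) * b < n * m := by
          intro t
          have : (k - m + 1 + t.val) * b ≤ k * b :=
            Nat.mul_le_mul_right b (by omega)
          omega
        set g : Fin m → Fin (n * m) := fun t => ⟨(k - m + 1 + t.val) * b, hg t⟩ with hgdef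
        have hgaddr : ∀ t : Fin m,
            (batchTrace n m b hm (g t)).val = (k - m + 1 + t.val) % m := by
          intro t
          show ((k - m + 1 + t.val) * b / b) % m = _
          rw [Nat.mul_div_cancel _ hb]
        have hinj : Function.Injective (fun t => batchTrace n m b hm (g t)) := by
          intro t t' htt
          have h1 : (k - m + 1 + t.val) % m = (k - m + 1 + t'.val) % m := by
            rw [← hgaddr t, ← hgaddr t']; exact congrArg Fin.val htt
          rcases le_total t.val t'.val with hle | hle
          · have := mod_eq_close h1 (by omega) (by omega)
            exact Fin.ext (by omega)
          · have := mod_eq_close h1.symm (by omega) (by omega)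
            exact Fin.ext (by omega)
        have hsub : (Finset.univ.image (fun t => batchTrace n m b hm (g t)))
            ⊆ S.image (batchTrace n m b hm) := by
          intro x hx
          simp only [Finset.mem_image, Finset.mem_univ, true_and] at hx
          obtain ⟨t, rfl⟩ := hx
          apply Finset.mem_image_of_mem
          simp only [hS, Finset.mem_filter, Finset.mem_univ, true_and]
          have hj₀v : j₀.val = (k - m) * b + (b - 1) := rfl
          have hgv : (g t).val = (k - m + 1 + t.val) * b := rfl
          constructor
          · show j₀.val < (g t).val
            have h1 : (k - m + 1) * b ≤ (k - m + 1 + t.val) * b :=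
              Nat.mul_le_mul_right b (by omega)
            have h2 : (k - m) * b + b = (k - m + 1) * b := by ring
            omega
          · show (g t).val ≤ i.val
            have h1 : (k - m + 1 + t.val) * b ≤ k * b :=
              Nat.mul_le_mul_right b (by omega)
            omega
        calc m = (Finset.univ : Finset (Fin m)).card := by simp
          _ = (Finset.univ.image (fun t => batchTrace n m b hm (g t))).card :=
            (Finset.card_image_of_injective _ hinj).symm
          _ ≤ (S.image (batchTrace n m b hm)).card := Finset.card_le_card hsub
  · rw [if_neg h]
    have hi1 : 1 ≤ i.val := by
      rcases Nat.eq_zero_or_pos i.val with h0 | h1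
    -- if i = 0 then i % b = 0
      · exact absurd (h0 ▸ Nat.zero_mod b) h
      · exact h1
    set j₀ : Fin (n * m) := ⟨i.val - 1, lt_of_le_of_lt (by omega) i.isLt⟩ with hj₀
    have hj₀lt : j₀ < i := by show i.val - 1 < i.val; omega
    rw [RD_eq_of_max (batchTrace n m b hm) i j₀ hj₀lt
      (Fin.ext (by
        show ((i.val - 1) / b) % m = (i.val / b) % m
        rw [div_pred_eq hb h]))
      (by intro j hjl hjr _; have : i.val - 1 < j.val := hjl; have : j.val < i.val := hjr; omega)]
    have hseg : Finset.univ.filter (fun k : Fin (n * m) => j₀ < k ∧ k ≤ i) = {i} := by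
      ext x
      simp only [Finset.mem_filter, Finset.mem_univ, true_and, Finset.mem_singleton]
      constructor
      · rintro ⟨hl, hr⟩
        have : i.val - 1 < x.val := hl
        have : x.val ≤ i.val := hr
        exact Fin.ext (by omega)
      · rintro rfl
        exact ⟨hj₀lt, le_refl _⟩
    rw [hseg, Finset.image_singleton, Finset.card_singleton]

/-- Theorem 2: the total reuse distance of the mini-batched trace equals
exactly `(n/b)·m·(m + b − 1)`, a reduction by the factor `b` of the sequential
total `n·m²`. -/
theorem totalRD_batchTrace {n m b : ℕ} (hn : 1 ≤ n) (hm : 1 ≤ m) (hb : 1 ≤ b)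
    (hdvd : b ∣ n) :
    totalRD (batchTrace n m b hm) = (n / b) * m * (m + b - 1) := by
  obtain ⟨r, rfl⟩ := hdvd
  have hb0 : 0 < b := hb
  have hnb : b * r / b = r := Nat.mul_div_cancel_left r hb0
  rw [totalRD]
  have hRD : ∀ i : Fin (b * r * m), RD (batchTrace (b * r) m b hm) i
      = if i.val % b = 0 then m else 1 := RD_batch hm hb0
  simp only [hRD]
  rw [Fin.sum_univ_eq_sum_range (fun i => if i % b = 0 then m else 1) (b * r * m)]
  rw [Finset.sum_ite, Finset.sum_const, Finset.sum_const, smul_eq_mul, smul_eq_mul]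
  have hN : b * r * m = (r * m) * b := by ring
  have hcount : ((Finset.range (b * r * m)).filter (fun i => i % b = 0)).card = r * m := by
    rw [hN]; exact count_mult b (r * m) hb0
  have htotal := Finset.card_filter_add_card_filter_not
    (s := Finset.range (b * r * m)) (p := fun i => i % b = 0)
  rw [Finset.card_range] at htotal
  have hcount' : ((Finset.range (b * r * m)).filter (fun i => ¬ i % b = 0)).card
      = b * r * m - r * m := by omega
  rw [hcount, hcount', hnb]
  obtain ⟨m', rfl⟩ : ∃ m', m = 1 + m' := ⟨m - 1, by omega⟩
  obtain ⟨b', rfl⟩ : ∃ b', b = 1 + b' := ⟨b - 1, by omega⟩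
  have hsub : (1 + b') * r * (1 + m') - r * (1 + m') = b' * (r * (1 + m')) := by
    rw [show (1 + b') * r * (1 + m') = r * (1 + m') + b' * (r * (1 + m')) by ring]
    omega
  rw [hsub, show 1 + m' + (1 + b') - 1 = 1 + m' + b' by omega]
  ring
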